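/- Let q be a prime power and let C be an arbitrary F_q-linear code of length n (an F_q-linear subspace of F_q^n). Then there exist a positive integer N and a cyclic code D of length N over F_q such that C can be obtained from D by a finite sequence of operations, each of which is either a puncturing or a shortening at a single coordinate position. -/

import Mathlib

/-- A single step: puncturing or shortening a linear code of length `n+1`
at one coordinate position, yielding a linear code of length `n`. -/
inductive CodeStep (F : Type*) [Field F] :
    ∀ {m n : ℕ}, Submodule F (Fin m → F) → Submodule F (Fin n → F) → Prop
  | puncture {n : ℕ} (i : Fin (n + 1)) (D : Submodule F (Fin (n + 1) → F)) :
      CodeStep F D (D.map (LinearMap.funLeft F F i.succAbove))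
  | shorten {n : ℕ} (i : Fin (n + 1)) (D : Submodule F (Fin (n + 1) → F)) :
      CodeStep F D
        ((D ⊓ LinearMap.ker (LinearMap.proj i)).map (LinearMap.funLeft F F i.succAbove))

/-- `ObtainedFrom F D C` : the code `C` can be obtained from the code `D` by a finite
sequence of puncturing and/or shortening operations at single coordinate positions. -/
inductive ObtainedFrom (F : Type*) [Field F] :
    ∀ {m n : ℕ}, Submodule F (Fin m → F) → Submodule F (Fin n → F) → Prop
  | refl {n : ℕ} (C : Submodule F (Fin n → F)) : ObtainedFrom F C C
  | tail {m k n : ℕ} {D : Submodule F (Fin m → F)} {E : Submodule F (Fin k → F)}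
      {C : Submodule F (Fin n → F)} :
      ObtainedFrom F D E → CodeStep F E C → ObtainedFrom F D C

/-- A linear code of (positive) length `N + 1` is cyclic if it is closed under the
cyclic shift `(c₀, …, c_N) ↦ (c_N, c₀, …, c_{N-1})`. -/
def IsCyclicCode (F : Type*) [Field F] {N : ℕ} (D : Submodule F (Fin (N + 1) → F)) : Prop :=
  ∀ c ∈ D, (fun i : Fin (N + 1) => c (i - 1)) ∈ D

/-!
Let `K / F` be an extension of degree `n + 1`, `γ` a generator of `Kˣ` of order `e`, and
`ψ : K → F^n ⧸ C` a surjection with nonzero kernel. The code `D` of length `(n + 1) e` with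
parity-check columns `1, γ, …, γ^((n+1)e - 1)` is cyclic, because multiplication by `γ` shifts
the columns. The class of the `t`-th unit vector in `F^n ⧸ C` is `ψ (γ ^ l t)` for some `l t < e`.
Keeping the coordinates `t e + l t`, puncturing every other coordinate whose column lies in `ker ψ`
and shortening the rest turns `D` into `{c | ∑ c t • γ ^ l t ∈ ker ψ} = C`: the last block of
length `e` runs through all of `Kˣ`, so the punctured columns span `ker ψ`.
-/

open Function Module

theorem Fin.exists_succAbove_comp_of_strictMono {n m : ℕ} {keep : Fin n → Fin (n + m + 1)}
    (hk : StrictMono keep) :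
    ∃ (j : Fin (n + m + 1)) (keep' : Fin n → Fin (n + m)),
      StrictMono keep' ∧ keep = j.succAbove ∘ keep' := by
  obtain ⟨j, hj⟩ : ∃ j, j ∉ Set.range keep := by
    by_contra! hsurj
    have := Fintype.card_le_of_surjective keep (Set.range_eq_univ.mp (Set.eq_univ_of_forall hsurj))
    simp at this
  choose keep' hkeep' using fun t => Fin.exists_succAbove_eq fun h => hj ⟨t, h⟩
  refine ⟨j, keep', fun a b hab => ?_, funext fun t => (hkeep' t).symm⟩
  exact (Fin.strictMono_succAbove j).lt_iff_lt.mp (by simpa only [hkeep'] using hk hab)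

theorem Set.image_compl_range_succAbove_comp_subset {α : Type*} {n m : ℕ} (w : Fin (m + 1) → α)
    (j : Fin (m + 1)) (keep : Fin n → Fin m) :
    w '' (Set.range (j.succAbove ∘ keep))ᶜ ⊆
      insert (w j) ((w ∘ j.succAbove) '' (Set.range keep)ᶜ) := by
  rintro _ ⟨i, hi, rfl⟩
  rcases eq_or_ne i j with rfl | hij
  · exact Set.mem_insert _ _
  · obtain ⟨z, rfl⟩ := Fin.exists_succAbove_eq hij
    exact Set.mem_insert_of_mem _ ⟨z, fun ⟨t, ht⟩ => hi ⟨t, by simp [ht]⟩, rfl⟩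

theorem pow_finVal_add_one {M : Type*} [Monoid M] {γ : M} {N : ℕ} (hγ : γ ^ (N + 1) = 1)
    (i : Fin (N + 1)) : γ ^ ((i + 1 : Fin (N + 1)) : ℕ) = γ * γ ^ (i : ℕ) := by
  rw [Fin.val_add, Fin.val_one', Nat.add_mod_mod, ← pow_eq_pow_mod _ hγ, pow_succ']

section Codes

variable {F : Type*} [Field F]

theorem ObtainedFrom.head {m k n : ℕ} {D : Submodule F (Fin m → F)}
    {E : Submodule F (Fin k → F)} {C : Submodule F (Fin n → F)}
    (hDE : CodeStep F D E) (hEC : ObtainedFrom F E C) : ObtainedFrom F D C := by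
  induction hEC with
  | refl => exact .tail (.refl D) hDE
  | tail _ hstep ih => exact .tail (ih hDE) hstep

section CheckCode

variable {V : Type*} [AddCommGroup V] [Module F V]

/-- For `U = ⊥`, the code with parity-check columns `w i`. -/
def checkCode {m : ℕ} (w : Fin m → V) (U : Submodule F V) : Submodule F (Fin m → F) :=
  U.comap (Fintype.linearCombination F w)

theorem mem_checkCode {m : ℕ} {w : Fin m → V} {U : Submodule F V} {c : Fin m → F} :
    c ∈ checkCode w U ↔ ∑ i, c i • w i ∈ U := by
  rw [checkCode, Submodule.mem_comap, Fintype.linearCombination_apply]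

theorem CodeStep.shorten_checkCode {m : ℕ} (w : Fin (m + 1) → V) (U : Submodule F V)
    (i : Fin (m + 1)) : CodeStep F (checkCode w U) (checkCode (w ∘ i.succAbove) U) := by
  convert CodeStep.shorten i (checkCode w U) using 1
  ext c
  simp only [Submodule.mem_map, Submodule.mem_inf, mem_checkCode, LinearMap.mem_ker,
    LinearMap.proj_apply, comp_apply]
  constructor
  · intro hc
    refine ⟨i.insertNth 0 c, ⟨?_, by simp⟩, by ext; simp [LinearMap.funLeft_apply]⟩
    simpa [Fin.sum_univ_succAbove _ i] using hc
  · rintro ⟨d, ⟨hd, hdi⟩, rfl⟩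
    simpa [Fin.sum_univ_succAbove _ i, hdi, LinearMap.funLeft_apply] using hd

theorem CodeStep.puncture_checkCode {m : ℕ} (w : Fin (m + 1) → V) (U : Submodule F V)
    (i : Fin (m + 1)) :
    CodeStep F (checkCode w U) (checkCode (w ∘ i.succAbove) (U ⊔ Submodule.span F {w i})) := by
  convert CodeStep.puncture i (checkCode w U) using 1
  ext c
  simp only [Submodule.mem_map, mem_checkCode, comp_apply]
  constructor
  · intro hc
    obtain ⟨u, hu, _, ha, huv⟩ := Submodule.mem_sup.mp hc
    obtain ⟨a, rfl⟩ := Submodule.mem_span_singleton.mp ha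
    refine ⟨i.insertNth (-a) c, ?_, by ext; simp [LinearMap.funLeft_apply]⟩
    simpa [Fin.sum_univ_succAbove _ i, ← huv] using hu
  · rintro ⟨d, hd, rfl⟩
    have hsum := Fin.sum_univ_succAbove (fun j => d j • w j) i
    simp only [LinearMap.funLeft_apply]
    rw [eq_sub_of_add_eq' hsum.symm]
    exact sub_mem (Submodule.mem_sup_left hd)
      (Submodule.mem_sup_right (Submodule.smul_mem _ _ (Submodule.mem_span_singleton_self _)))

/-- The unkept coordinates are removed one at a time: puncturing at `j` adds `w j` to `U`,
shortening keeps `U`; the second inequality says that the punctured columns fill up `Us`. -/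
theorem obtainedFrom_checkCode_comp {n : ℕ} : ∀ {m : ℕ} (w : Fin (n + m) → V)
    {keep : Fin n → Fin (n + m)}, StrictMono keep → ∀ {U Us : Submodule F V}, U ≤ Us →
      Us ≤ U ⊔ Submodule.span F (w '' (Set.range keep)ᶜ ∩ Us) →
      ObtainedFrom F (checkCode w U) (checkCode (w ∘ keep) Us)
  | 0, w, keep, hk, U, Us, hle, hUs => by
    obtain rfl : keep = id := hk.eq_id
    simp only [Set.range_id, Set.compl_univ, Set.image_empty, Set.empty_inter,
      Submodule.span_empty, sup_bot_eq] at hUs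
    rw [le_antisymm hle hUs]
    exact .refl _
  | m + 1, w, keep, hk, U, Us, hle, hUs => by
    obtain ⟨j, keep', hk', rfl⟩ := Fin.exists_succAbove_comp_of_strictMono hk
    have hsub := Set.inter_subset_inter_left (Us : Set V)
      (Set.image_compl_range_succAbove_comp_subset w j keep')
    by_cases hwj : w j ∈ Us
    · refine .head (CodeStep.puncture_checkCode w U j)
        (obtainedFrom_checkCode_comp _ hk' (sup_le hle (by simpa using hwj)) (hUs.trans ?_))
      refine (sup_le_sup_left (Submodule.span_mono hsub) U).trans_eq ?_
      rw [Set.insert_inter_of_mem hwj, Submodule.span_insert, sup_assoc]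
    · refine .head (CodeStep.shorten_checkCode w U j)
        (obtainedFrom_checkCode_comp _ hk' hle (hUs.trans ?_))
      rw [Set.insert_inter_of_notMem hwj] at hsub
      exact sup_le_sup_left (Submodule.span_mono hsub) U

theorem isCyclicCode_checkCode {N : ℕ} {w : Fin (N + 1) → V} {U : Submodule F V}
    (T : V →ₗ[F] V) (hw : ∀ i, w (i + 1) = T (w i)) (hU : ∀ x ∈ U, T x ∈ U) :
    IsCyclicCode F (checkCode w U) := by
  intro c hc
  rw [mem_checkCode] at hc ⊢
  have hshift : ∑ i, c (i - 1) • w i = T (∑ i, c i • w i) := by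
    rw [map_sum]
    exact (Fintype.sum_equiv (Equiv.addRight 1) _ _ fun i => by simp [hw]).symm
  exact hshift ▸ hU _ hc

theorem checkCode_ker_eq {n : ℕ} (C : Submodule F (Fin n → F)) {v : Fin n → V}
    (f : V →ₗ[F] (Fin n → F) ⧸ C) (hv : ∀ t, f (v t) = C.mkQ (Pi.single t 1)) :
    checkCode v (LinearMap.ker f) = C := by
  ext c
  have hsum : ∑ t, c t • (Pi.single t 1 : Fin n → F) = c := by
    ext; simp [Pi.single_apply]
  rw [mem_checkCode, LinearMap.mem_ker, map_sum]
  simp_rw [map_smul, hv, ← map_smul, ← map_sum, hsum]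
  exact Submodule.Quotient.mk_eq_zero C

end CheckCode

theorem obtainedFrom_checkCode_pow {K : Type*} [Ring K] [Module F K] {γ : K} {e n L : ℕ}
    (hL : (n + 1) * e ≤ L) (hγ : γ ^ e = 1) {l : Fin n → ℕ} (hl : ∀ t, l t < e)
    {U : Submodule F K} (hU : ∀ x ∈ U, x ≠ 0 → ∃ j < e, γ ^ j = x) :
    ObtainedFrom F (checkCode (fun i : Fin L => γ ^ (i : ℕ)) ⊥)
      (checkCode (fun t => γ ^ l t) U) := by
  have hblock : ∀ t : Fin n, t * e + l t < n * e := fun t => by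
    have := Nat.mul_le_mul_right e t.isLt
    rw [Nat.succ_mul] at this
    linarith [hl t]
  let keep : Fin n → Fin L := fun t => ⟨t * e + l t, by nlinarith [hblock t]⟩
  have hkeep : StrictMono keep := fun s t hst => by
    have := Nat.mul_le_mul_right e (Nat.succ_le_of_lt hst)
    rw [Nat.succ_mul] at this
    show s * e + l s < t * e + l t
    linarith [hl s]
  obtain ⟨m, rfl⟩ := Nat.exists_eq_add_of_le
    (by simpa using Fintype.card_le_of_injective _ hkeep.injective : n ≤ L)
  convert obtainedFrom_checkCode_comp _ hkeep bot_le (Us := U) ?_ using 2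
  · ext t
    simp [keep, pow_add, pow_mul', hγ]
  intro x hx
  obtain rfl | hx0 := eq_or_ne x 0
  · exact zero_mem _
  obtain ⟨j, hj, rfl⟩ := hU x hx hx0
  refine Submodule.mem_sup_right (Submodule.subset_span ⟨⟨⟨n * e + j, by nlinarith⟩, ?_, ?_⟩, hx⟩)
  · rintro ⟨t, ht⟩
    have := congrArg Fin.val ht
    simp only [keep] at this
    linarith [hblock t]
  · simp [pow_add, pow_mul', hγ]

end Codes

theorem exists_linearMap_forall_exists_ne_zero_apply_eq {F V W : Type*} [Field F]
    [AddCommGroup V] [Module F V] [FiniteDimensional F V]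
    [AddCommGroup W] [Module F W] [FiniteDimensional F W] (h : finrank F W < finrank F V) :
    ∃ f : V →ₗ[F] W, ∀ y, ∃ x ≠ 0, f x = y := by
  let f : V →ₗ[F] W := (finBasis F W).equivFun.symm.toLinearMap ∘ₗ
    LinearMap.funLeft F F (Fin.castLE h.le) ∘ₗ (finBasis F V).equivFun.toLinearMap
  have hf : Surjective f := by
    simp only [f, LinearMap.coe_comp, LinearEquiv.coe_coe]
    exact (finBasis F W).equivFun.symm.surjective.comp <|
      (LinearMap.funLeft_surjective_of_injective _ _ _ (Fin.castLE_injective _)).comp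
        (finBasis F V).equivFun.surjective
  obtain ⟨k, hk, hk0⟩ :=
    Submodule.exists_mem_ne_zero_of_ne_bot (LinearMap.ker_ne_bot_of_finrank_lt h)
  refine ⟨f, fun y => ?_⟩
  obtain ⟨x, rfl⟩ := hf y
  obtain rfl | hx0 := eq_or_ne x 0
  · exact ⟨k, hk0, by simpa using hk⟩
  · exact ⟨x, hx0, rfl⟩

theorem FiniteField.exists_forall_ne_zero_exists_pow_eq (K : Type*) [Field K] [Finite K] :
    ∃ γ : K, ∀ x ≠ 0, ∃ l < orderOf γ, γ ^ l = x := by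
  classical
  have := Fintype.ofFinite K
  obtain ⟨g, hg⟩ := IsCyclic.exists_generator (α := Kˣ)
  refine ⟨g, fun x hx => ?_⟩
  have hx' := Finset.mem_univ (Units.mk0 x hx)
  rw [← IsCyclic.image_range_orderOf hg, Finset.mem_image] at hx'
  obtain ⟨l, hl, hgl⟩ := hx'
  exact ⟨l, by simpa [orderOf_units] using hl, by simpa using congrArg Units.val hgl⟩

/-- Any `F_q`-linear code `C` of length `n` can be obtained from some cyclic code `D`
of some positive length over `F_q` by a finite sequence of puncturings and/or
shortenings at single coordinate positions. -/
theorem any_linear_code_obtained_from_cyclic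
    (F : Type*) [Field F] [Fintype F] (n : ℕ) (C : Submodule F (Fin n → F)) :
    ∃ (N : ℕ) (D : Submodule F (Fin (N + 1) → F)),
      IsCyclicCode F D ∧ ObtainedFrom F D C := by
  have := Fact.mk (CharP.char_is_prime F (ringChar F))
  let K := FiniteField.Extension F (ringChar F) (n + 1)
  obtain ⟨ψ, hψ⟩ := exists_linearMap_forall_exists_ne_zero_apply_eq (V := K)
    (W := (Fin n → F) ⧸ C) <| by
      rw [FiniteField.finrank_extension]
      exact Nat.lt_succ_of_le ((C.finrank_quotient_le).trans (finrank_fin_fun F).le)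
  obtain ⟨γ, hγ⟩ := FiniteField.exists_forall_ne_zero_exists_pow_eq K
  have hpre : ∀ y, ∃ l < orderOf γ, ψ (γ ^ l) = y := fun y => by
    obtain ⟨x, hx0, rfl⟩ := hψ y
    obtain ⟨l, hl, rfl⟩ := hγ x hx0
    exact ⟨l, hl, rfl⟩
  choose l hl hψl using fun t => hpre (C.mkQ (Pi.single t 1))
  obtain ⟨N, hN⟩ : ∃ N, N + 1 = (n + 1) * orderOf γ := by
    obtain ⟨l₀, hl₀, -⟩ := hγ 1 one_ne_zero
    exact ⟨(n + 1) * orderOf γ - 1, Nat.sub_add_cancel (by nlinarith)⟩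
  have hγN : γ ^ (N + 1) = 1 := by rw [hN, pow_mul', pow_orderOf_eq_one, one_pow]
  refine ⟨N, _, isCyclicCode_checkCode (w := fun i => γ ^ (i : ℕ)) (U := ⊥)
    (LinearMap.mulLeft F γ) (pow_finVal_add_one hγN) (by simp), ?_⟩
  rw [← checkCode_ker_eq C ψ hψl]
  exact obtainedFrom_checkCode_pow hN.ge (pow_orderOf_eq_one γ) hl fun x _ hx0 => hγ x hx0
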